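/- arXiv:2206.07875 — 3 statements merged into one kernel-verified Lean document; each statement's English description precedes it below -/
import Mathlib

section
/- Let H be a symmetric positive definite real n×n matrix and let ℓ : ℝⁿ → ℝ be convex and differentiable with L-Lipschitz gradient, L > 0. Then for every step size s with 0 < s ≤ λ_min(H)/L, the operator u ↦ u − s·H⁻¹∇ℓ(u) is nonexpansive with respect to ‖·‖_H, i.e. ‖(u₁ − s·H⁻¹∇ℓ(u₁)) − (u₂ − s·H⁻¹∇ℓ(u₂))‖_H ≤ ‖u₁ − u₂‖_H for all u₁, u₂ ∈ ℝⁿ. -/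
/-!
Convexity together with an `L`-Lipschitz gradient gives Baillon–Haddad cocoercivity
`‖∇ℓ u₁ - ∇ℓ u₂‖² ≤ L ⟪∇ℓ u₁ - ∇ℓ u₂, u₁ - u₂⟫`: compare the supporting hyperplane at `x` with
the descent lemma at `y`, both evaluated at the gradient step from `y`. With `d = u₁ - u₂` and
`g = ∇ℓ u₁ - ∇ℓ u₂` one has `‖d - s H⁻¹ g‖²_H = ‖d‖²_H - 2 s ⟪g, d⟫ + s² ⟪H⁻¹ g, g⟫`, and the
Rayleigh bound gives `λ_min ⟪H⁻¹ g, g⟫ ≤ ‖g‖² ≤ L ⟪g, d⟫`, so the last term is at most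
`s ⟪g, d⟫` as soon as `s L ≤ λ_min`.
-/

open scoped RealInnerProductSpace

/-- The `H`-inner product `⟨u, v⟩_H = uᵀ H v` on `ℝⁿ`. -/
noncomputable def hIP {n : ℕ} (H : Matrix (Fin n) (Fin n) ℝ)
    (u v : EuclideanSpace ℝ (Fin n)) : ℝ :=
  ⟪u, Matrix.toEuclideanLin H v⟫

/-- The `H`-norm `‖u‖_H = √(uᵀ H u)` on `ℝⁿ`. -/
noncomputable def hNorm {n : ℕ} (H : Matrix (Fin n) (Fin n) ℝ)
    (u : EuclideanSpace ℝ (Fin n)) : ℝ :=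
  Real.sqrt (hIP H u u)

/-- The smallest eigenvalue `λ_min(H)` of a Hermitian matrix `H`. -/
noncomputable def lambdaMin {n : ℕ} (H : Matrix (Fin n) (Fin n) ℝ)
    (hH : H.IsHermitian) : ℝ :=
  ⨅ i, hH.eigenvalues i

section Gradient

variable {F : Type*} [NormedAddCommGroup F] [InnerProductSpace ℝ F] [CompleteSpace F]
  {f : F → ℝ}

lemma DifferentiableAt.hasDerivAt_comp_add_smul {x v : F} {t : ℝ}
    (hf : DifferentiableAt ℝ f (x + t • v)) :
    HasDerivAt (fun τ : ℝ => f (x + τ • v)) ⟪gradient f (x + t • v), v⟫ t := by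
  have hline : HasDerivAt (fun τ : ℝ => x + τ • v) v t := by
    simpa using ((hasDerivAt_id t).smul_const v).const_add x
  have hgrad := hasGradientAt_iff_hasFDerivAt.mp hf.hasGradientAt
  exact (hgrad.comp_hasDerivAt t hline).congr_deriv (by simp)

lemma ConvexOn.add_inner_gradient_le (hconv : ConvexOn ℝ Set.univ f) {x : F}
    (hf : DifferentiableAt ℝ f x) (y : F) : f x + ⟪gradient f x, y - x⟫ ≤ f y := by
  have hline : ConvexOn ℝ Set.univ (fun τ : ℝ => f (x + τ • (y - x))) := by
    simpa [Function.comp_def, AffineMap.lineMap_apply, add_comm] using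
      hconv.comp_affineMap (AffineMap.lineMap x y : ℝ →ᵃ[ℝ] F)
  have hderiv : HasDerivAt (fun τ : ℝ => f (x + τ • (y - x))) ⟪gradient f x, y - x⟫ 0 :=
    DifferentiableAt.hasDerivAt_comp_add_smul (by simpa using hf) |>.congr_deriv (by simp)
  have := hline.le_slope_of_hasDerivAt trivial trivial one_pos hderiv
  simp only [slope_def_field, zero_smul, add_zero, one_smul, add_sub_cancel, sub_zero,
    div_one] at this
  linarith

lemma le_add_inner_gradient_add_sq (hdiff : Differentiable ℝ f) {L : ℝ}
    (hLip : ∀ u v, ‖gradient f u - gradient f v‖ ≤ L * ‖u - v‖) (x v : F) :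
    f (x + v) ≤ f x + ⟪gradient f x, v⟫ + L / 2 * ‖v‖ ^ 2 := by
  set χ : ℝ → ℝ := fun τ => f (x + τ • v) - τ * ⟪gradient f x, v⟫ - L / 2 * τ ^ 2 * ‖v‖ ^ 2
  have hχ : ∀ τ, HasDerivAt χ
      (⟪gradient f (x + τ • v) - gradient f x, v⟫ - L * τ * ‖v‖ ^ 2) τ := fun τ => by
    have := (((hdiff (x + τ • v)).hasDerivAt_comp_add_smul).sub
      ((hasDerivAt_id τ).mul_const ⟪gradient f x, v⟫)).sub
      (((hasDerivAt_pow 2 τ).const_mul (L / 2)).mul_const (‖v‖ ^ 2))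
    refine this.congr_deriv ?_
    rw [inner_sub_left]
    norm_num only
    ring
  have hχ' : ∀ τ, 0 < τ →
      ⟪gradient f (x + τ • v) - gradient f x, v⟫ - L * τ * ‖v‖ ^ 2 ≤ 0 := fun τ hτ => by
    have hnorm : ‖x + τ • v - x‖ = τ * ‖v‖ := by simp [norm_smul, hτ.le]
    have := (real_inner_le_norm _ v).trans
      (mul_le_mul_of_nonneg_right (hLip (x + τ • v) x) (norm_nonneg v))
    rw [hnorm] at this
    linarith
  have hanti : AntitoneOn χ (Set.Ici 0) := by
    refine antitoneOn_of_hasDerivWithinAt_nonpos (convex_Ici 0)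
      (fun τ _ => (hχ τ).continuousAt.continuousWithinAt)
      (fun τ _ => (hχ τ).hasDerivWithinAt) fun τ hτ => hχ' τ ?_
    simpa using hτ
  have := hanti Set.self_mem_Ici (Set.mem_Ici.mpr zero_le_one) zero_le_one
  simp only [χ, zero_smul, add_zero, one_smul, zero_mul, sub_zero, one_mul, one_pow] at this
  linarith

lemma ConvexOn.add_inner_gradient_add_norm_sq_le (hconv : ConvexOn ℝ Set.univ f)
    (hdiff : Differentiable ℝ f) {L : ℝ} (hL : 0 < L)
    (hLip : ∀ u v, ‖gradient f u - gradient f v‖ ≤ L * ‖u - v‖) (x y : F) :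
    f x + ⟪gradient f x, y - x⟫ + ‖gradient f y - gradient f x‖ ^ 2 / (2 * L) ≤ f y := by
  set g := gradient f y - gradient f x
  have hlow := hconv.add_inner_gradient_le (hdiff x) (y - L⁻¹ • g)
  have hup := le_add_inner_gradient_add_sq hdiff hLip y (-(L⁻¹ • g))
  rw [← sub_eq_add_neg] at hup
  rw [sub_right_comm] at hlow
  simp only [inner_sub_right, inner_neg_right, real_inner_smul_right,
    norm_neg, norm_smul, Real.norm_eq_abs, abs_inv, abs_of_pos hL, mul_pow] at hlow hup
  have hgg : L⁻¹ * ⟪gradient f y, g⟫ - L⁻¹ * ⟪gradient f x, g⟫ = L⁻¹ * ‖g‖ ^ 2 := by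
    rw [← mul_sub, ← inner_sub_left, real_inner_self_eq_norm_sq]
  have hcoef : ‖g‖ ^ 2 / (2 * L) = L⁻¹ * ‖g‖ ^ 2 - L / 2 * (L⁻¹ ^ 2 * ‖g‖ ^ 2) := by
    field_simp; ring
  rw [inner_sub_right]
  linarith

theorem ConvexOn.norm_sub_gradient_sq_le_mul_inner (hconv : ConvexOn ℝ Set.univ f)
    (hdiff : Differentiable ℝ f) {L : ℝ} (hL : 0 < L)
    (hLip : ∀ u v, ‖gradient f u - gradient f v‖ ≤ L * ‖u - v‖) (x y : F) :
    ‖gradient f x - gradient f y‖ ^ 2 ≤ L * ⟪gradient f x - gradient f y, x - y⟫ := by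
  have hxy := hconv.add_inner_gradient_add_norm_sq_le hdiff hL hLip x y
  have hyx := hconv.add_inner_gradient_add_norm_sq_le hdiff hL hLip y x
  rw [norm_sub_rev] at hxy
  have hsum : ⟪gradient f x, y - x⟫ + ⟪gradient f y, x - y⟫
      = -⟪gradient f x - gradient f y, x - y⟫ := by
    rw [← neg_sub x y, inner_neg_right, inner_sub_left]; ring
  have hhalf : ‖gradient f x - gradient f y‖ ^ 2 / (2 * L) * 2 =
      ‖gradient f x - gradient f y‖ ^ 2 / L := by
    ring
  rw [← div_le_iff₀' hL]
  linarith

end Gradient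

section Quadratic

open Matrix

variable {n : ℕ}

lemma lambdaMin_mul_norm_sq_le_inner {H : Matrix (Fin n) (Fin n) ℝ} (hH : H.IsHermitian)
    (w : EuclideanSpace ℝ (Fin n)) :
    lambdaMin H hH * ‖w‖ ^ 2 ≤ ⟪w, toEuclideanLin H w⟫ := by
  set b := hH.eigenvectorBasis
  have hsymm : (toEuclideanLin H).IsSymmetric := isSymmetric_toEuclideanLin_iff.mpr hH
  have hb : ∀ i, ⟪b i, toEuclideanLin H w⟫ = hH.eigenvalues i * ⟪b i, w⟫ := fun i => by
    rw [← hsymm, toLpLin_apply, hH.mulVec_eigenvectorBasis, WithLp.toLp_smul, WithLp.toLp_ofLp,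
      real_inner_smul_left]
  calc lambdaMin H hH * ‖w‖ ^ 2
      = ∑ i, lambdaMin H hH * ⟪b i, w⟫ ^ 2 := by rw [← b.sum_sq_inner_right, Finset.mul_sum]
    _ ≤ ∑ i, hH.eigenvalues i * ⟪b i, w⟫ ^ 2 := by
        gcongr with i
        exact ciInf_le (Set.finite_range _).bddBelow i
    _ = ⟪w, toEuclideanLin H w⟫ := by
        rw [← b.sum_inner_mul_inner]
        refine Finset.sum_congr rfl fun i _ => ?_
        rw [hb, real_inner_comm]
        ring

lemma lambdaMin_mul_inner_le_norm_sq {H : Matrix (Fin n) (Fin n) ℝ} (hH : H.IsHermitian)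
    (hmin : 0 ≤ lambdaMin H hH) (w : EuclideanSpace ℝ (Fin n)) :
    lambdaMin H hH * ⟪w, toEuclideanLin H w⟫ ≤ ‖toEuclideanLin H w‖ ^ 2 := by
  have hray := mul_le_mul_of_nonneg_left (lambdaMin_mul_norm_sq_le_inner hH w) hmin
  have hcs := mul_le_mul_of_nonneg_left (real_inner_le_norm w (toEuclideanLin H w)) hmin
  nlinarith [sq_nonneg (lambdaMin H hH * ‖w‖ - ‖toEuclideanLin H w‖)]

lemma hIP_sub_smul_self {H : Matrix (Fin n) (Fin n) ℝ} (hH : H.IsHermitian)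
    (d w : EuclideanSpace ℝ (Fin n)) (s : ℝ) :
    hIP H (d - s • w) (d - s • w) =
      hIP H d d - 2 * s * ⟪toEuclideanLin H w, d⟫ + s ^ 2 * ⟪w, toEuclideanLin H w⟫ := by
  have hsymm : ⟪w, toEuclideanLin H d⟫ = ⟪toEuclideanLin H w, d⟫ :=
    (isSymmetric_toEuclideanLin_iff.mpr hH w d).symm
  simp only [hIP, map_sub, map_smul, inner_sub_left, inner_sub_right, real_inner_smul_left,
    real_inner_smul_right, hsymm, real_inner_comm d]
  ring

lemma Matrix.toEuclideanLin_mul_inv_apply {H : Matrix (Fin n) (Fin n) ℝ} (hH : IsUnit H.det)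
    (g : EuclideanSpace ℝ (Fin n)) : toEuclideanLin H (toEuclideanLin H⁻¹ g) = g := by
  rw [← LinearMap.comp_apply, ← toLpLin_mul_same, mul_nonsing_inv H hH, toLpLin_one,
    LinearMap.id_apply]

end Quadratic

/-- for convex `ℓ` with `L`-Lipschitz gradient and
`0 < s ≤ λ_min(H)/L`, the operator `u ↦ u − s·H⁻¹∇ℓ(u)` is nonexpansive
with respect to `‖·‖_H`. -/
theorem stmt_2 {n : ℕ} (H : Matrix (Fin n) (Fin n) ℝ) (hH : H.PosDef)
    (ℓ : EuclideanSpace ℝ (Fin n) → ℝ)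
    (hconv : ConvexOn ℝ Set.univ ℓ) (hdiff : Differentiable ℝ ℓ)
    (L : ℝ) (hL : 0 < L)
    (hLip : ∀ u v, ‖gradient ℓ u - gradient ℓ v‖ ≤ L * ‖u - v‖)
    (s : ℝ) (hs : 0 < s) (hs' : s ≤ lambdaMin H hH.1 / L) :
    ∀ u₁ u₂,
      hNorm H ((u₁ - s • Matrix.toEuclideanLin H⁻¹ (gradient ℓ u₁)) -
               (u₂ - s • Matrix.toEuclideanLin H⁻¹ (gradient ℓ u₂))) ≤
        hNorm H (u₁ - u₂) := by
  intro u₁ u₂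
  set d := u₁ - u₂
  set g := gradient ℓ u₁ - gradient ℓ u₂
  set w := Matrix.toEuclideanLin H⁻¹ g
  set lam := lambdaMin H hH.1
  have hHw : Matrix.toEuclideanLin H w = g :=
    Matrix.toEuclideanLin_mul_inv_apply hH.det_pos.ne'.isUnit g
  have hstep : (u₁ - s • Matrix.toEuclideanLin H⁻¹ (gradient ℓ u₁)) -
      (u₂ - s • Matrix.toEuclideanLin H⁻¹ (gradient ℓ u₂)) = d - s • w := by
    simp only [d, w, g, map_sub, smul_sub]; abel
  have hcoco : ‖g‖ ^ 2 ≤ L * ⟪g, d⟫ := hconv.norm_sub_gradient_sq_le_mul_inner hdiff hL hLip u₁ u₂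
  have hgd : 0 ≤ ⟪g, d⟫ := nonneg_of_mul_nonneg_right ((sq_nonneg _).trans hcoco) hL
  have hsL : s * L ≤ lam := (le_div_iff₀ hL).mp hs'
  have hlam : 0 < lam := (mul_pos hs hL).trans_le hsL
  have hray : lam * ⟪w, g⟫ ≤ ‖g‖ ^ 2 := by
    simpa only [hHw] using lambdaMin_mul_inner_le_norm_sq hH.1 hlam.le w
  have hkey : lam * (s ^ 2 * ⟪w, g⟫) ≤ lam * (2 * s * ⟪g, d⟫) := calc
    lam * (s ^ 2 * ⟪w, g⟫) = s ^ 2 * (lam * ⟪w, g⟫) := by ring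
    _ ≤ s ^ 2 * (L * ⟪g, d⟫) := mul_le_mul_of_nonneg_left (hray.trans hcoco) (sq_nonneg s)
    _ = s * (s * L) * ⟪g, d⟫ := by ring
    _ ≤ s * lam * ⟪g, d⟫ := by gcongr
    _ ≤ lam * (2 * s * ⟪g, d⟫) := by nlinarith [mul_nonneg (mul_nonneg hs.le hlam.le) hgd]
  rw [hstep, hNorm, hNorm, hIP_sub_smul_self hH.1, hHw]
  refine Real.sqrt_le_sqrt ?_
  linarith [le_of_mul_le_mul_left hkey hlam]
end

section
/- Consider the aggregated iteration with D nonexpansive with respect to ‖·‖_H, ℓ convex and differentiable with L-Lipschitz gradient, α, μ ∈ (0,1), s ∈ (0, λ_min(H)/L), and U a nonempty closed convex subset of ℝⁿ. Set β_k := 1/(k+1) and η := (1−α)/α. Then for every u ∈ Fix(T) ∩ U and every k ≥ 0: μ·s·β_k·ℓ(u) ≥ μ·s·β_k·ℓ(v_u^{k+1}) − (1/2)·‖u − u^k‖²_H + (1/2)·‖u − u^{k+1}‖²_H + (1/2)·‖((1−μ)·v_l^{k+1} + μ·v_u^{k+1}) − u^{k+1}‖²_H + ((1−μ)·η/2)·‖u^k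 − v_l^{k+1}‖²_H + (μ/2)·(1 − s·β_k·L/λ_min(H))·‖u^k − v_u^{k+1}‖²_H. -/
open scoped RealInnerProductSpace
open Filter Topology

/-!
Factor `H = SᵀS`, so that `‖·‖_H = ‖S ·‖` and every estimate becomes Euclidean geometry.
As `S u^{k+1}` is the point of `S(U)` nearest to `S w`, where `w = μ v_u + (1 - μ) v_l`, the
obtuse-angle criterion gives `‖u - u^{k+1}‖² + ‖w - u^{k+1}‖² ≤ ‖u - w‖²`, and convexity of
`‖·‖²` splits `‖u - w‖²` into the two branches. The lower branch is an `α`-averaged step of a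
nonexpansive map fixing `u`, which produces the `η`-term. The upper branch is a gradient step
in the metric `H`: the gradient inequality for convex `ℓ` and the descent lemma bound it, and
comparing `‖·‖` with `‖·‖_H` through `λ_min(H)` costs the factor `1 - s β_k L / λ_min(H)`.
-/

open scoped Gradient

section InnerProductSpace

variable {F : Type*} [NormedAddCommGroup F] [InnerProductSpace ℝ F]

theorem norm_smul_add_smul_sq {a b : ℝ} (hab : a + b = 1) (x y : F) :
    ‖a • x + b • y‖ ^ 2 = a * ‖x‖ ^ 2 + b * ‖y‖ ^ 2 - a * b * ‖x - y‖ ^ 2 := by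
  obtain rfl := eq_sub_of_add_eq hab
  rw [norm_add_sq_real, norm_sub_sq_real, norm_smul, norm_smul, real_inner_smul_left,
    real_inner_smul_right, mul_pow, mul_pow, Real.norm_eq_abs, Real.norm_eq_abs, sq_abs, sq_abs]
  ring

theorem norm_smul_add_smul_sq_le {a b : ℝ} (ha : 0 ≤ a) (hb : 0 ≤ b) (hab : a + b = 1)
    (x y : F) : ‖a • x + b • y‖ ^ 2 ≤ a * ‖x‖ ^ 2 + b * ‖y‖ ^ 2 := by
  rw [norm_smul_add_smul_sq hab]
  have := mul_nonneg (mul_nonneg ha hb) (sq_nonneg ‖x - y‖)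
  linarith

theorem norm_sub_sq_add_norm_sub_sq_le_of_isMinOn {K : Set F} (hK : Convex ℝ K) {p w y : F}
    (hp : p ∈ K) (hy : y ∈ K) (hmin : IsMinOn (fun z => ‖z - w‖) K p) :
    ‖y - p‖ ^ 2 + ‖w - p‖ ^ 2 ≤ ‖y - w‖ ^ 2 := by
  have : Nonempty K := ⟨⟨p, hp⟩⟩
  have hinf : ‖w - p‖ = ⨅ z : K, ‖w - z‖ := by
    refine le_antisymm (le_ciInf fun z => ?_) (ciInf_le ?_ (⟨p, hp⟩ : K))
    · simpa only [norm_sub_rev w] using isMinOn_iff.mp hmin z z.2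
    · exact ⟨0, Set.forall_mem_range.2 fun _ => norm_nonneg _⟩
  have hvi := (norm_eq_iInf_iff_real_inner_le_zero hK hp).mp hinf y hy
  have hsplit : y - w = (y - p) - (w - p) := by abel
  rw [hsplit, norm_sub_sq_real (y - p), real_inner_comm]
  linarith

theorem norm_sub_averaged_sq_add_le {α : ℝ} (hα : 0 < α) {x y d : F}
    (hd : ‖y - d‖ ≤ ‖y - x‖) :
    ‖y - ((1 - α) • x + α • d)‖ ^ 2 + (1 - α) / α * ‖x - ((1 - α) • x + α • d)‖ ^ 2
      ≤ ‖y - x‖ ^ 2 := by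
  have hy : y - ((1 - α) • x + α • d) = (1 - α) • (y - x) + α • (y - d) := by module
  have hx : x - ((1 - α) • x + α • d) = α • (x - d) := by module
  have hcancel : (1 - α) / α * (α ^ 2 * ‖x - d‖ ^ 2) = (1 - α) * α * ‖x - d‖ ^ 2 := by
    field_simp
  rw [hy, hx, norm_smul_add_smul_sq (by ring), norm_smul, mul_pow, Real.norm_eq_abs, sq_abs,
    sub_sub_sub_cancel_left, norm_sub_rev d x, hcancel]
  linear_combination α * pow_le_pow_left₀ (norm_nonneg _) hd 2

end InnerProductSpace

section Gradient

variable {E : Type*} [NormedAddCommGroup E] [InnerProductSpace ℝ E] [CompleteSpace E]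
  {ℓ : E → ℝ}

theorem DifferentiableAt.hasDerivAt_comp_add_smul_s4 {x d : E} {t : ℝ}
    (h : DifferentiableAt ℝ ℓ (x + t • d)) :
    HasDerivAt (fun t : ℝ => ℓ (x + t • d)) ⟪∇ ℓ (x + t • d), d⟫ t := by
  have hline : HasDerivAt (fun t : ℝ => x + t • d) d t := by
    simpa using ((hasDerivAt_id t).smul_const d).const_add x
  exact h.hasGradientAt.hasFDerivAt.comp_hasDerivAt t hline

theorem ConvexOn.inner_gradient_le (hconv : ConvexOn ℝ Set.univ ℓ) {x : E}
    (hx : DifferentiableAt ℝ ℓ x) (y : E) :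
    ⟪∇ ℓ x, y - x⟫ ≤ ℓ y - ℓ x := by
  have hline : ConvexOn ℝ Set.univ (fun t : ℝ => ℓ (x + t • (y - x))) := by
    simpa [Function.comp_def, AffineMap.lineMap_apply, add_comm] using
      hconv.comp_affineMap (AffineMap.lineMap x y)
  have hderiv := (show DifferentiableAt ℝ ℓ (x + (0 : ℝ) • (y - x)) by simpa using hx)
    |>.hasDerivAt_comp_add_smul
  simpa [slope_def_field] using
    hline.le_slope_of_hasDerivAt (Set.mem_univ 0) (Set.mem_univ 1) one_pos hderiv

theorem apply_le_apply_add_inner_gradient_add_sq (hdiff : Differentiable ℝ ℓ) {L : ℝ}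
    (hLip : ∀ u v, ‖∇ ℓ u - ∇ ℓ v‖ ≤ L * ‖u - v‖) (x y : E) :
    ℓ y ≤ ℓ x + ⟪∇ ℓ x, y - x⟫ + L / 2 * ‖y - x‖ ^ 2 := by
  set d := y - x
  set φ : ℝ → ℝ := fun t => ℓ (x + t • d) - t * ⟪∇ ℓ x, d⟫ - L / 2 * t ^ 2 * ‖d‖ ^ 2
  have hφ : ∀ t, HasDerivAt φ (⟪∇ ℓ (x + t • d) - ∇ ℓ x, d⟫ - L * t * ‖d‖ ^ 2) t := by
    intro t
    have := (((hdiff (x + t • d)).hasDerivAt_comp_add_smul_s4).sub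
      ((hasDerivAt_id t).mul_const ⟪∇ ℓ x, d⟫)).sub
      (((hasDerivAt_pow 2 t).const_mul (L / 2)).mul_const (‖d‖ ^ 2))
    exact this.congr_deriv (by rw [inner_sub_left]; ring)
  have hanti : AntitoneOn φ (Set.Ici 0) := by
    refine antitoneOn_of_hasDerivWithinAt_nonpos (convex_Ici 0)
      (HasDerivAt.continuousOn fun t _ => hφ t) (fun t _ => (hφ t).hasDerivWithinAt) ?_
    intro t ht
    rw [interior_Ici, Set.mem_Ioi] at ht
    have hlip : ‖∇ ℓ (x + t • d) - ∇ ℓ x‖ ≤ L * (t * ‖d‖) := by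
      simpa [norm_smul, abs_of_pos ht] using hLip (x + t • d) x
    linear_combination real_inner_le_norm (∇ ℓ (x + t • d) - ∇ ℓ x) d + ‖d‖ * hlip
  have h01 := hanti (Set.mem_Ici.2 le_rfl) (Set.mem_Ici.2 zero_le_one) zero_le_one
  simp only [φ, d, one_smul, add_sub_cancel, zero_smul, add_zero] at h01
  linarith

/-- `r` is the gradient of `ℓ` at `x` for the inner product `⟪S ·, S ·⟫`. -/
theorem gradientStep_norm_sub_sq_add_le {F : Type*} [NormedAddCommGroup F]
    [InnerProductSpace ℝ F] (hconv : ConvexOn ℝ Set.univ ℓ) (hdiff : Differentiable ℝ ℓ)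
    {L : ℝ} (hL : 0 ≤ L) (hLip : ∀ u v, ‖∇ ℓ u - ∇ ℓ v‖ ≤ L * ‖u - v‖)
    (S : E →ₗ[ℝ] F) {m : ℝ} (hm : 0 < m) (hS : ∀ z, m * ‖z‖ ^ 2 ≤ ‖S z‖ ^ 2)
    {x r : E} (hr : ∀ z, ⟪S r, S z⟫ = ⟪∇ ℓ x, z⟫) {τ : ℝ} (hτ : 0 ≤ τ) (y : E) :
    ‖S (y - (x - τ • r))‖ ^ 2 + 2 * τ * ℓ (x - τ • r)
        + (1 - τ * L / m) * ‖S (x - (x - τ • r))‖ ^ 2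
      ≤ ‖S (y - x)‖ ^ 2 + 2 * τ * ℓ y := by
  set v := x - τ • r
  have hyv : ‖S (y - v)‖ ^ 2 = ‖S (y - x)‖ ^ 2 + 2 * τ * ⟪∇ ℓ x, y - x⟫ + τ ^ 2 * ‖S r‖ ^ 2 := by
    rw [show y - v = (y - x) + τ • r by module, map_add, map_smul, norm_add_sq_real,
      real_inner_smul_right, real_inner_comm, hr, norm_smul, mul_pow, Real.norm_eq_abs, sq_abs]
    ring
  have hxv : ‖S (x - v)‖ ^ 2 = τ ^ 2 * ‖S r‖ ^ 2 := by
    rw [show x - v = τ • r by module, map_smul, norm_smul, mul_pow, Real.norm_eq_abs, sq_abs]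
  have hdesc : ℓ v ≤ ℓ x - τ * ‖S r‖ ^ 2 + L / 2 * (τ ^ 2 * ‖r‖ ^ 2) := by
    have h := apply_le_apply_add_inner_gradient_add_sq hdiff hLip x v
    rwa [show v - x = -τ • r by module, real_inner_smul_right, ← hr, real_inner_self_eq_norm_sq,
      norm_smul, mul_pow, Real.norm_eq_abs, sq_abs, neg_sq, neg_mul, ← sub_eq_add_neg] at h
  have hconvx := hconv.inner_gradient_le (hdiff x) y
  have hr_norm : ‖r‖ ^ 2 ≤ ‖S r‖ ^ 2 / m := by
    rw [le_div_iff₀ hm]; linarith [hS r]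
  rw [hyv, hxv]
  linear_combination (2 * τ) * hconvx + (2 * τ) * hdesc + (L * τ ^ 3) * hr_norm

end Gradient

section HMetric

open Matrix

variable {n : ℕ} {H : Matrix (Fin n) (Fin n) ℝ}

open scoped MatrixOrder in
theorem exists_linearMap_hIP_eq_inner (hH : H.PosSemidef) :
    ∃ S : EuclideanSpace ℝ (Fin n) →ₗ[ℝ] EuclideanSpace ℝ (Fin n),
      (∀ x y, hIP H x y = ⟪S x, S y⟫) ∧ ∀ x, hNorm H x = ‖S x‖ := by
  obtain ⟨B, rfl⟩ := CStarAlgebra.nonneg_iff_eq_star_mul_self.mp hH.nonneg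
  have hip : ∀ x y, hIP (star B * B) x y = ⟪toEuclideanLin B x, toEuclideanLin B y⟫ := by
    intro x y
    rw [hIP, ← LinearMap.adjoint_inner_right, ← toEuclideanLin_conjTranspose_eq_adjoint]
    simp [toLpLin_apply, mulVec_mulVec, star_eq_conjTranspose]
  refine ⟨toEuclideanLin B, hip, fun x => ?_⟩
  rw [hNorm, hip, real_inner_self_eq_norm_sq, Real.sqrt_sq (norm_nonneg _)]

theorem hIP_toEuclideanLin_inv_left (hH : H.IsHermitian) (hunit : IsUnit H)
    (y z : EuclideanSpace ℝ (Fin n)) :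
    hIP H (toEuclideanLin H⁻¹ y) z = ⟪y, z⟫ := by
  rw [hIP, ← LinearMap.adjoint_inner_left, ← toEuclideanLin_conjTranspose_eq_adjoint, hH.eq]
  simp [toLpLin_apply, mulVec_mulVec, mul_nonsing_inv _ ((isUnit_iff_isUnit_det H).mp hunit)]

open scoped MatrixOrder in
theorem lambdaMin_mul_norm_sq_le_hIP (hH : H.IsHermitian) (x : EuclideanSpace ℝ (Fin n)) :
    lambdaMin H hH * ‖x‖ ^ 2 ≤ hIP H x x := by
  have hle : algebraMap ℝ _ (lambdaMin H hH) ≤ H := by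
    rw [algebraMap_le_iff_le_spectrum (a := H) hH.isSelfAdjoint,
      hH.spectrum_real_eq_range_eigenvalues]
    rintro _ ⟨i, rfl⟩
    exact ciInf_le (Set.finite_range _).bddBelow i
  have h := (le_iff.mp hle).dotProduct_mulVec_nonneg x.ofLp
  rw [← real_inner_self_eq_norm_sq, hIP]
  simp only [EuclideanSpace.inner_eq_star_dotProduct, toLpLin_apply]
  simpa [sub_mulVec, Algebra.algebraMap_eq_smul_one, smul_mulVec, dotProduct_comm] using h

end HMetric

theorem stmt_4_general {n : ℕ} (H : Matrix (Fin n) (Fin n) ℝ) (hH : H.PosDef)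
    (D : EuclideanSpace ℝ (Fin n) → EuclideanSpace ℝ (Fin n))
    (hD : ∀ u₁ u₂, hNorm H (D u₁ - D u₂) ≤ hNorm H (u₁ - u₂))
    (ℓ : EuclideanSpace ℝ (Fin n) → ℝ)
    (hconv : ConvexOn ℝ Set.univ ℓ) (hdiff : Differentiable ℝ ℓ)
    (L : ℝ) (hL : 0 < L)
    (hLip : ∀ u v, ‖gradient ℓ u - gradient ℓ v‖ ≤ L * ‖u - v‖)
    (α μ : ℝ) (hα : α ∈ Set.Ioo (0 : ℝ) 1) (hμ : μ ∈ Set.Ioo (0 : ℝ) 1)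
    (s : ℝ) (hs : s ∈ Set.Ioo 0 (lambdaMin H hH.1 / L))
    (U : Set (EuclideanSpace ℝ (Fin n)))
    (hUco : Convex ℝ U)
    (T : EuclideanSpace ℝ (Fin n) → EuclideanSpace ℝ (Fin n))
    (hT : ∀ u, T u = (1 - α) • u + α • D u)
    (u vl vu : ℕ → EuclideanSpace ℝ (Fin n))
    (hvl : ∀ k, vl (k + 1) = T (u k))
    (hvu : ∀ k, vu (k + 1) =
      u k - (s / ((k : ℝ) + 1)) • Matrix.toEuclideanLin H⁻¹ (gradient ℓ (u k)))
    (hproj : ∀ k, u (k + 1) ∈ U ∧ ∀ w ∈ U,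
      hNorm H (u (k + 1) - (μ • vu (k + 1) + (1 - μ) • vl (k + 1))) ≤
        hNorm H (w - (μ • vu (k + 1) + (1 - μ) • vl (k + 1)))) :
    ∀ u', T u' = u' → u' ∈ U → ∀ k : ℕ,
      μ * s * (1 / ((k : ℝ) + 1)) * ℓ u' ≥
        μ * s * (1 / ((k : ℝ) + 1)) * ℓ (vu (k + 1))
          - (1 / 2) * hNorm H (u' - u k) ^ 2
          + (1 / 2) * hNorm H (u' - u (k + 1)) ^ 2
          + (1 / 2) * hNorm H (((1 - μ) • vl (k + 1) + μ • vu (k + 1)) - u (k + 1)) ^ 2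
          + ((1 - μ) * ((1 - α) / α) / 2) * hNorm H (u k - vl (k + 1)) ^ 2
          + (μ / 2) * (1 - s * (1 / ((k : ℝ) + 1)) * L / lambdaMin H hH.1) *
              hNorm H (u k - vu (k + 1)) ^ 2 := by
  intro u' hfix hu' k
  obtain ⟨S, hS_inner, hS_norm⟩ := exists_linearMap_hIP_eq_inner hH.posSemidef
  set w := μ • vu (k + 1) + (1 - μ) • vl (k + 1)
  have hlam : 0 < lambdaMin H hH.1 := (div_pos_iff_of_pos_right hL).mp (hs.1.trans hs.2)
  have hDu' : D u' = u' := smul_right_injective _ hα.1.ne' <| by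
    linear_combination (norm := module) (hT u').symm.trans hfix
  have hproj' : ‖S (u' - u (k + 1))‖ ^ 2 + ‖S (w - u (k + 1))‖ ^ 2 ≤ ‖S (u' - w)‖ ^ 2 := by
    simpa only [map_sub] using norm_sub_sq_add_norm_sub_sq_le_of_isMinOn (hUco.linear_image S)
      (Set.mem_image_of_mem S (hproj k).1) (Set.mem_image_of_mem S hu') <| isMinOn_iff.mpr <| by
        rintro _ ⟨z, hz, rfl⟩; simpa only [hS_norm, map_sub] using (hproj k).2 z hz
  have hmix : ‖S (u' - w)‖ ^ 2
      ≤ (1 - μ) * ‖S (u' - vl (k + 1))‖ ^ 2 + μ * ‖S (u' - vu (k + 1))‖ ^ 2 := by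
    rw [show S (u' - w) = (1 - μ) • S (u' - vl (k + 1)) + μ • S (u' - vu (k + 1)) by
      simp only [w, map_sub, map_add, map_smul]; module]
    exact norm_smul_add_smul_sq_le (sub_nonneg.2 hμ.2.le) hμ.1.le (by ring) _ _
  have havg : ‖S (u' - vl (k + 1))‖ ^ 2 + (1 - α) / α * ‖S (u k - vl (k + 1))‖ ^ 2
      ≤ ‖S (u' - u k)‖ ^ 2 := by
    simpa only [hvl, hT, map_sub, map_add, map_smul] using
      norm_sub_averaged_sq_add_le hα.1 (x := S (u k)) (y := S u') (d := S (D (u k)))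
        (by simpa only [hS_norm, map_sub, hDu'] using hD u' (u k))
  have hgrad := gradientStep_norm_sub_sq_add_le hconv hdiff hL.le hLip S hlam
    (x := u k) (r := Matrix.toEuclideanLin H⁻¹ (gradient ℓ (u k)))
    (fun z => by
      rw [← real_inner_self_eq_norm_sq (S z), ← hS_inner]; exact lambdaMin_mul_norm_sq_le_hIP hH.1 z)
    (fun z => by rw [← hS_inner, hIP_toEuclideanLin_inv_left hH.1 hH.isUnit])
    (by have := hs.1; positivity : 0 ≤ s / ((k : ℝ) + 1)) u'
  rw [← hvu] at hgrad
  rw [add_comm ((1 - μ) • vl (k + 1))]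
  simp only [hS_norm]
  linear_combination (1 / 2) * hproj' + (1 / 2) * hmix
    + (1 / 2) * mul_le_mul_of_nonneg_left havg (sub_nonneg.2 hμ.2.le)
    + (1 / 2) * mul_le_mul_of_nonneg_left hgrad hμ.1.le

/-- the key one-step estimate for the aggregated iteration
(Lemma A.2 of the paper), valid at every `u ∈ Fix(T) ∩ U`. -/
theorem stmt_4 {n : ℕ} (H : Matrix (Fin n) (Fin n) ℝ) (hH : H.PosDef)
    (D : EuclideanSpace ℝ (Fin n) → EuclideanSpace ℝ (Fin n))
    (hD : ∀ u₁ u₂, hNorm H (D u₁ - D u₂) ≤ hNorm H (u₁ - u₂))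
    (ℓ : EuclideanSpace ℝ (Fin n) → ℝ)
    (hconv : ConvexOn ℝ Set.univ ℓ) (hdiff : Differentiable ℝ ℓ)
    (L : ℝ) (hL : 0 < L)
    (hLip : ∀ u v, ‖gradient ℓ u - gradient ℓ v‖ ≤ L * ‖u - v‖)
    (α μ : ℝ) (hα : α ∈ Set.Ioo (0 : ℝ) 1) (hμ : μ ∈ Set.Ioo (0 : ℝ) 1)
    (s : ℝ) (hs : s ∈ Set.Ioo 0 (lambdaMin H hH.1 / L))
    (U : Set (EuclideanSpace ℝ (Fin n)))
    (hUne : U.Nonempty) (hUcl : IsClosed U) (hUco : Convex ℝ U)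
    (T : EuclideanSpace ℝ (Fin n) → EuclideanSpace ℝ (Fin n))
    (hT : ∀ u, T u = (1 - α) • u + α • D u)
    (u vl vu : ℕ → EuclideanSpace ℝ (Fin n))
    (hu0 : u 0 ∈ U)
    (hvl : ∀ k, vl (k + 1) = T (u k))
    (hvu : ∀ k, vu (k + 1) =
      u k - (s / ((k : ℝ) + 1)) • Matrix.toEuclideanLin H⁻¹ (gradient ℓ (u k)))
    (hproj : ∀ k, u (k + 1) ∈ U ∧ ∀ w ∈ U,
      hNorm H (u (k + 1) - (μ • vu (k + 1) + (1 - μ) • vl (k + 1))) ≤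
        hNorm H (w - (μ • vu (k + 1) + (1 - μ) • vl (k + 1)))) :
    ∀ u', T u' = u' → u' ∈ U → ∀ k : ℕ,
      μ * s * (1 / ((k : ℝ) + 1)) * ℓ u' ≥
        μ * s * (1 / ((k : ℝ) + 1)) * ℓ (vu (k + 1))
          - (1 / 2) * hNorm H (u' - u k) ^ 2
          + (1 / 2) * hNorm H (u' - u (k + 1)) ^ 2
          + (1 / 2) * hNorm H (((1 - μ) • vl (k + 1) + μ • vu (k + 1)) - u (k + 1)) ^ 2
          + ((1 - μ) * ((1 - α) / α) / 2) * hNorm H (u k - vl (k + 1)) ^ 2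
          + (μ / 2) * (1 - s * (1 / ((k : ℝ) + 1)) * L / lambdaMin H hH.1) *
              hNorm H (u k - vu (k + 1)) ^ 2 :=
  stmt_4_general H hH D hD ℓ hconv hdiff L hL hLip α μ hα hμ s hs U hUco T hT u vl vu hvl hvu hproj
end

section
/- Let Ω ⊆ ℝ^m be compact, let H_ω (ω ∈ Ω) be symmetric positive definite n×n matrices with H_lb ⪯ H_ω ⪯ H_ub for fixed symmetric positive definite H_lb, H_ub, and let T : ℝⁿ × Ω → ℝⁿ satisfy ‖T(u₁,ω) − T(u₂,ω)‖_{H_ω} ≤ ρ‖u₁ − u₂‖_{H_ω} for all u₁, u₂ ∈ ℝⁿ and ω ∈ Ω, for some ρ ∈ (0,1). Let u*(ω) denote the unique fixed point of T(·,ω), and assume sup_{ω∈Ω} ‖u*(ω)‖ < ∞. Let ℓ : ℝⁿ × Ω → ℝ be such that each ℓ(·,ω) is convex and differentiable with L-Lipschitz gradient, with M* := sup_{ω∈Ω} ‖∇_u ℓ(u*(ω),ω)‖ < ∞. Fix μ ∈ (0,1), s ∈ (0, λ_min(H_lb)/L), u⁰ ∈ ℝⁿ, and define for each ω ∈ Ω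 and k ≥ 0: u^{k+1}(ω) := μ·(u^k(ω) − (s/(k+2))·H_ω⁻¹∇_u ℓ(u^k(ω),ω)) + (1−μ)·T(u^k(ω),ω), with u^0(ω) := u⁰. Then sup_{ω∈Ω} ‖u^k(ω) − u*(ω)‖_{H_ω} → 0 as k → ∞. -/
open scoped RealInnerProductSpace
open Filter Topology

/-!
Write `e_k(ω) = ‖u^k(ω) − u*(ω)‖_{H_ω}`. The `H`-norm is the Euclidean norm after applying
`H^{1/2}`, and `H_lb ⪯ H_ω` gives one `c > 0` with `c‖·‖ ≤ ‖·‖_{H_ω}` for all `ω`, whence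
`‖H_ω⁻¹ g‖_{H_ω} ≤ ‖g‖ / c`. Expanding one step around the fixed point `u* = T(u*)` and using the
contraction of `T` and the Lipschitz gradient gives, uniformly in `ω`,
`e_{k+1} ≤ (μ + (1 − μ)ρ + O(1/k)) e_k + O(1/k)`, while `e_0` is bounded through `H_ω ⪯ H_ub`
and the bound on `u*`. As `μ + (1 − μ)ρ < 1`, such a recursion drives `e_k` to `0` uniformly.
-/

open scoped MatrixOrder

theorem exists_hNorm_le_mul_norm {n : ℕ} (H : Matrix (Fin n) (Fin n) ℝ) :
    ∃ C ≥ 0, ∀ x : EuclideanSpace ℝ (Fin n), hNorm H x ≤ C * ‖x‖ := by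
  let A := LinearMap.toContinuousLinearMap (Matrix.toEuclideanLin H)
  refine ⟨Real.sqrt ‖A‖, Real.sqrt_nonneg _, fun x => ?_⟩
  have hIP_le : hIP H x x ≤ ‖A‖ * ‖x‖ ^ 2 :=
    calc hIP H x x ≤ ‖x‖ * ‖A x‖ := real_inner_le_norm _ _
      _ ≤ ‖x‖ * (‖A‖ * ‖x‖) := mul_le_mul_of_nonneg_left (A.le_opNorm x) (norm_nonneg x)
      _ = ‖A‖ * ‖x‖ ^ 2 := by ring
  calc hNorm H x ≤ Real.sqrt (‖A‖ * ‖x‖ ^ 2) := Real.sqrt_le_sqrt hIP_le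
    _ = Real.sqrt ‖A‖ * ‖x‖ := by rw [Real.sqrt_mul (norm_nonneg _), Real.sqrt_sq (norm_nonneg _)]

section HNorm

variable {n : ℕ} {H : Matrix (Fin n) (Fin n) ℝ}

theorem hIP_self_eq_norm_sqrt_sq (hH : H.PosSemidef) (x : EuclideanSpace ℝ (Fin n)) :
    hIP H x x = ‖Matrix.toEuclideanLin (CFC.sqrt H) x‖ ^ 2 := by
  set S := Matrix.toEuclideanLin (CFC.sqrt H)
  have hS : S.IsSymmetric :=
    Matrix.isSymmetric_toEuclideanLin_iff.mpr
      (Matrix.nonneg_iff_posSemidef.mp (CFC.sqrt_nonneg H)).isHermitian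
  have hHS : Matrix.toEuclideanLin H x = S (S x) := by
    conv_lhs => rw [← CFC.sqrt_mul_sqrt_self H hH.nonneg]
    simp [S, Matrix.toLpLin_apply, Matrix.mulVec_mulVec]
  rw [hIP, hHS, ← hS, real_inner_self_eq_norm_sq]

theorem hNorm_eq_norm_sqrt (hH : H.PosSemidef) (x : EuclideanSpace ℝ (Fin n)) :
    hNorm H x = ‖Matrix.toEuclideanLin (CFC.sqrt H) x‖ := by
  rw [hNorm, hIP_self_eq_norm_sqrt_sq hH, Real.sqrt_sq (norm_nonneg _)]

theorem hNorm_nonneg (x : EuclideanSpace ℝ (Fin n)) : 0 ≤ hNorm H x := Real.sqrt_nonneg _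

theorem hNorm_sq (hH : H.PosSemidef) (x : EuclideanSpace ℝ (Fin n)) :
    hNorm H x ^ 2 = hIP H x x := by
  rw [hNorm_eq_norm_sqrt hH, hIP_self_eq_norm_sqrt_sq hH]

theorem hNorm_smul (hH : H.PosSemidef) (a : ℝ) (x : EuclideanSpace ℝ (Fin n)) :
    hNorm H (a • x) = |a| * hNorm H x := by
  simp only [hNorm_eq_norm_sqrt hH, map_smul, norm_smul, Real.norm_eq_abs]

theorem hNorm_add_le (hH : H.PosSemidef) (x y : EuclideanSpace ℝ (Fin n)) :
    hNorm H (x + y) ≤ hNorm H x + hNorm H y := by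
  simpa only [hNorm_eq_norm_sqrt hH, map_add] using norm_add_le _ _

theorem hNorm_sub_le (hH : H.PosSemidef) (x y : EuclideanSpace ℝ (Fin n)) :
    hNorm H (x - y) ≤ hNorm H x + hNorm H y := by
  simpa only [hNorm_eq_norm_sqrt hH, map_sub] using norm_sub_le _ _

theorem hNorm_le_hNorm {H' : Matrix (Fin n) (Fin n) ℝ} {x : EuclideanSpace ℝ (Fin n)}
    (h : hIP H x x ≤ hIP H' x x) : hNorm H x ≤ hNorm H' x :=
  Real.sqrt_le_sqrt h

theorem hIP_self_pos (hH : H.PosDef) {x : EuclideanSpace ℝ (Fin n)} (hx : x ≠ 0) :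
    0 < hIP H x x := by
  simpa [hIP, Matrix.toLpLin_apply, EuclideanSpace.inner_eq_star_dotProduct, dotProduct_comm]
    using hH.dotProduct_mulVec_pos (x := x.ofLp) (by simpa using hx)

theorem exists_pos_mul_norm_le_hNorm (hH : H.PosDef) :
    ∃ c > 0, ∀ x : EuclideanSpace ℝ (Fin n), c * ‖x‖ ≤ hNorm H x := by
  have hker : LinearMap.ker (Matrix.toEuclideanLin (CFC.sqrt H)) = ⊥ :=
    LinearMap.ker_eq_bot'.mpr fun x hx => by
      by_contra hx0
      have hpos := hIP_self_pos hH hx0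
      rw [hIP_self_eq_norm_sqrt_sq hH.posSemidef, hx, norm_zero] at hpos
      simp at hpos
  obtain ⟨K, hK0, hK⟩ := LinearMap.exists_antilipschitzWith _ hker
  refine ⟨(K : ℝ)⁻¹, by positivity, fun x => ?_⟩
  rw [hNorm_eq_norm_sqrt hH.posSemidef, inv_mul_le_iff₀ (by positivity)]
  exact ZeroHomClass.bound_of_antilipschitz _ hK x

theorem mul_hNorm_inv_apply_le (hH : H.PosDef) {c : ℝ}
    (hc0 : 0 < c) (hc : ∀ x, c * ‖x‖ ≤ hNorm H x) (g : EuclideanSpace ℝ (Fin n)) :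
    c * hNorm H (Matrix.toEuclideanLin H⁻¹ g) ≤ ‖g‖ := by
  set v := Matrix.toEuclideanLin H⁻¹ g
  have hHv : Matrix.toEuclideanLin H v = g := by
    simp [v, Matrix.toLpLin_apply, Matrix.mulVec_mulVec,
      Matrix.mul_nonsing_inv _ hH.det_pos.ne'.isUnit]
  have hsq : c * hNorm H v * hNorm H v ≤ ‖g‖ * hNorm H v :=
    calc c * hNorm H v * hNorm H v = c * ⟪v, g⟫ := by
          rw [mul_assoc, ← sq, hNorm_sq hH.posSemidef, hIP, hHv]
      _ ≤ c * (‖v‖ * ‖g‖) := mul_le_mul_of_nonneg_left (real_inner_le_norm v g) hc0.le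
      _ ≤ ‖g‖ * hNorm H v := by nlinarith [hc v, norm_nonneg g]
  rcases (hNorm_nonneg (H := H) v).eq_or_lt with h0 | hpos
  · rw [← h0, mul_zero]; exact norm_nonneg g
  · exact le_of_mul_le_mul_right hsq hpos

theorem hNorm_relaxed_step_sub_le (hH : H.PosDef)
    {c : ℝ} (hc0 : 0 < c) (hc : ∀ x, c * ‖x‖ ≤ hNorm H x)
    {μ ρ η L M : ℝ} (hμ0 : 0 ≤ μ) (hμ1 : μ ≤ 1) (hη : 0 ≤ η) (hL : 0 ≤ L)
    {u ustar Tu g : EuclideanSpace ℝ (Fin n)}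
    (hTu : hNorm H (Tu - ustar) ≤ ρ * hNorm H (u - ustar))
    (hg : ‖g‖ ≤ M + L * ‖u - ustar‖) :
    hNorm H (μ • (u - η • Matrix.toEuclideanLin H⁻¹ g) + (1 - μ) • Tu - ustar) ≤
      (μ + (1 - μ) * ρ + μ * η * L / c ^ 2) * hNorm H (u - ustar) + μ * η * M / c := by
  have hH' := hH.posSemidef
  set a := hNorm H (u - ustar)
  set v := Matrix.toEuclideanLin H⁻¹ g
  have hdist : ‖u - ustar‖ ≤ a / c := by rw [le_div_iff₀' hc0]; exact hc _
  have hv : hNorm H v ≤ (M + L * (a / c)) / c := by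
    rw [le_div_iff₀' hc0]
    exact (mul_hNorm_inv_apply_le hH hc0 hc g).trans
      (hg.trans (by gcongr))
  have hsplit : μ • (u - η • v) + (1 - μ) • Tu - ustar =
      (μ • (u - ustar) + (1 - μ) • (Tu - ustar)) - (μ * η) • v := by module
  rw [hsplit]
  calc _ ≤ hNorm H (μ • (u - ustar)) + hNorm H ((1 - μ) • (Tu - ustar)) + hNorm H ((μ * η) • v) :=
        (hNorm_sub_le hH' _ _).trans (by gcongr; exact hNorm_add_le hH' _ _)
    _ = μ * a + (1 - μ) * hNorm H (Tu - ustar) + μ * η * hNorm H v := by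
        rw [hNorm_smul hH', hNorm_smul hH', hNorm_smul hH', abs_of_nonneg hμ0,
          abs_of_nonneg (sub_nonneg.mpr hμ1), abs_of_nonneg (mul_nonneg hμ0 hη)]
    _ ≤ μ * a + (1 - μ) * (ρ * a) + μ * η * ((M + L * (a / c)) / c) := by
        gcongr
    _ = _ := by field_simp; ring

end HNorm

theorem le_pow_mul_add_div_of_le_mul_add {x : ℕ → ℝ} {q δ : ℝ} (hq0 : 0 ≤ q) (hq1 : q < 1)
    (hδ0 : 0 ≤ δ) (h : ∀ j, x (j + 1) ≤ q * x j + δ) (j : ℕ) : x j ≤ q ^ j * x 0 + δ / (1 - q) := by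
  have hq : 1 - q ≠ 0 := (sub_pos.mpr hq1).ne'
  have hδ : δ / (1 - q) = q * (δ / (1 - q)) + δ := by field_simp; ring
  induction j with
  | zero => have : 0 ≤ δ / (1 - q) := div_nonneg hδ0 (sub_pos.mpr hq1).le; simp; linarith
  | succ j ih =>
    calc x (j + 1) ≤ q * (q ^ j * x 0 + δ / (1 - q)) + δ := (h j).trans (by gcongr)
      _ = q ^ (j + 1) * x 0 + δ / (1 - q) := by linear_combination (-1 : ℝ) * hδ

theorem exists_forall_le_of_le_mul_add {ι : Type*} {e : ι → ℕ → ℝ} {α β : ℕ → ℝ}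
    (he : ∀ i k, 0 ≤ e i k) (h0 : ∃ A, ∀ i, e i 0 ≤ A)
    (hstep : ∀ i k, e i (k + 1) ≤ α k * e i k + β k) (k : ℕ) : ∃ B, ∀ i, e i k ≤ B := by
  induction k with
  | zero => exact h0
  | succ k ih =>
    obtain ⟨B, hB⟩ := ih
    refine ⟨|α k| * B + β k, fun i => (hstep i k).trans ?_⟩
    exact add_le_add ((mul_le_mul_of_nonneg_right (le_abs_self _) (he i k)).trans
      (mul_le_mul_of_nonneg_left (hB i) (abs_nonneg _))) le_rfl

theorem eventually_forall_le_of_le_mul_add {ι : Type*} {e : ι → ℕ → ℝ} {α β : ℕ → ℝ} {r : ℝ}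
    (hr : r < 1) (hα : Tendsto α atTop (𝓝 r)) (hβ : Tendsto β atTop (𝓝 0))
    (he : ∀ i k, 0 ≤ e i k) (h0 : ∃ A, ∀ i, e i 0 ≤ A)
    (hstep : ∀ i k, e i (k + 1) ≤ α k * e i k + β k) {ε : ℝ} (hε : 0 < ε) :
    ∀ᶠ k in atTop, ∀ i, e i k ≤ ε := by
  obtain ⟨q, hrq, hq1⟩ := exists_between (max_lt hr one_pos)
  have hq0 : 0 ≤ q := (le_max_right r 0).trans hrq.le
  have hδ : 0 < (1 - q) * ε / 2 := by have := sub_pos.mpr hq1; positivity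
  obtain ⟨K, hK⟩ := eventually_atTop.mp
    ((hα.eventually (gt_mem_nhds ((le_max_left r 0).trans_lt hrq))).and
      (hβ.eventually (gt_mem_nhds hδ)))
  obtain ⟨B, hB⟩ := exists_forall_le_of_le_mul_add he h0 hstep K
  have hdecay : ∀ i j, e i (K + j) ≤ q ^ j * B + ε / 2 := by
    intro i j
    have hrec : ∀ j, e i (K + j + 1) ≤ q * e i (K + j) + (1 - q) * ε / 2 := fun j =>
      (hstep i _).trans (add_le_add
        (mul_le_mul_of_nonneg_right (hK _ (K.le_add_right j)).1.le (he i _))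
        (hK _ (K.le_add_right j)).2.le)
    calc e i (K + j) ≤ q ^ j * e i (K + 0) + (1 - q) * ε / 2 / (1 - q) :=
          le_pow_mul_add_div_of_le_mul_add (x := fun j => e i (K + j)) hq0 hq1 hδ.le hrec j
      _ = q ^ j * e i K + ε / 2 := by
          have := (sub_pos.mpr hq1).ne'
          rw [add_zero]; field_simp
      _ ≤ q ^ j * B + ε / 2 := by gcongr; exact hB i
  have hpow : Tendsto (fun j => q ^ j * B) atTop (𝓝 0) := by
    simpa using (tendsto_pow_atTop_nhds_zero_of_lt_one hq0 hq1).mul_const B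
  obtain ⟨J, hJ⟩ := eventually_atTop.mp (hpow.eventually (ge_mem_nhds (half_pos hε)))
  filter_upwards [eventually_ge_atTop (K + J)] with k hk i
  obtain ⟨j, rfl⟩ := Nat.exists_eq_add_of_le (le_of_add_le_left hk)
  linarith [hdecay i j, hJ j (by omega)]

theorem stmt_14_general {n m : ℕ}
    (Ω : Set (EuclideanSpace ℝ (Fin m)))
    (Hlb Hub : Matrix (Fin n) (Fin n) ℝ) (hlb : Hlb.PosDef)
    (HM : EuclideanSpace ℝ (Fin m) → Matrix (Fin n) (Fin n) ℝ)
    (hHM : ∀ ω ∈ Ω, (HM ω).PosDef)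
    (hHMlb : ∀ ω ∈ Ω, ∀ x, hIP Hlb x x ≤ hIP (HM ω) x x)
    (hHMub : ∀ ω ∈ Ω, ∀ x, hIP (HM ω) x x ≤ hIP Hub x x)
    (T : EuclideanSpace ℝ (Fin n) → EuclideanSpace ℝ (Fin m) → EuclideanSpace ℝ (Fin n))
    (ρ : ℝ) (hρ : ρ ∈ Set.Ioo (0 : ℝ) 1)
    (hT : ∀ ω ∈ Ω, ∀ u₁ u₂,
      hNorm (HM ω) (T u₁ ω - T u₂ ω) ≤ ρ * hNorm (HM ω) (u₁ - u₂))
    (ustar : EuclideanSpace ℝ (Fin m) → EuclideanSpace ℝ (Fin n))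
    (hustar : ∀ ω ∈ Ω, T (ustar ω) ω = ustar ω)
    (hustarbdd : ∃ B : ℝ, ∀ ω ∈ Ω, ‖ustar ω‖ ≤ B)
    (ℓ : EuclideanSpace ℝ (Fin n) → EuclideanSpace ℝ (Fin m) → ℝ)
    (L : ℝ) (hL : 0 < L)
    (hLip : ∀ ω ∈ Ω, ∀ u v,
      ‖gradient (fun x => ℓ x ω) u - gradient (fun x => ℓ x ω) v‖ ≤ L * ‖u - v‖)
    (hMstar : ∃ Mstar : ℝ, ∀ ω ∈ Ω,
      ‖gradient (fun x => ℓ x ω) (ustar ω)‖ ≤ Mstar)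
    (μ : ℝ) (hμ : μ ∈ Set.Ioo (0 : ℝ) 1)
    (s : ℝ) (hs : s ∈ Set.Ioo 0 (lambdaMin Hlb hlb.1 / L))
    (u0 : EuclideanSpace ℝ (Fin n))
    (u : ℕ → EuclideanSpace ℝ (Fin m) → EuclideanSpace ℝ (Fin n))
    (hu0 : ∀ ω ∈ Ω, u 0 ω = u0)
    (hrec : ∀ ω ∈ Ω, ∀ k : ℕ, u (k + 1) ω =
      μ • (u k ω - (s / ((k : ℝ) + 2)) •
        Matrix.toEuclideanLin (HM ω)⁻¹ (gradient (fun x => ℓ x ω) (u k ω)))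
      + (1 - μ) • T (u k ω) ω) :
    ∀ ε > (0 : ℝ), ∃ K : ℕ, ∀ k, K ≤ k → ∀ ω ∈ Ω,
      hNorm (HM ω) (u k ω - ustar ω) ≤ ε := by
  obtain ⟨B, hB⟩ := hustarbdd
  obtain ⟨M, hM⟩ := hMstar
  obtain ⟨c, hc0, hc⟩ := exists_pos_mul_norm_le_hNorm hlb
  obtain ⟨C, hC0, hC⟩ := exists_hNorm_le_mul_norm Hub
  have hinit : ∀ ω ∈ Ω, hNorm (HM ω) (u 0 ω - ustar ω) ≤ C * (‖u0‖ + B) := fun ω hω => by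
    rw [hu0 ω hω]
    calc _ ≤ hNorm Hub (u0 - ustar ω) := hNorm_le_hNorm (hHMub ω hω _)
      _ ≤ C * ‖u0 - ustar ω‖ := hC _
      _ ≤ C * (‖u0‖ + B) := by gcongr; exact (norm_sub_le _ _).trans (by gcongr; exact hB ω hω)
  have hη : Tendsto (fun k : ℕ => s / ((k : ℝ) + 2)) atTop (𝓝 0) :=
    tendsto_const_nhds.div_atTop (tendsto_natCast_atTop_atTop.atTop_add tendsto_const_nhds)
  have hstep : ∀ (ω : Ω) (k : ℕ), hNorm (HM ω) (u (k + 1) ω - ustar ω) ≤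
      (μ + (1 - μ) * ρ + μ * (s / ((k : ℝ) + 2)) * L / c ^ 2) * hNorm (HM ω) (u k ω - ustar ω)
        + μ * (s / ((k : ℝ) + 2)) * M / c := by
    rintro ⟨ω, hω⟩ k
    rw [hrec ω hω k]
    refine hNorm_relaxed_step_sub_le (hHM ω hω) hc0
      (fun x => (hc x).trans (hNorm_le_hNorm (hHMlb ω hω x))) hμ.1.le hμ.2.le
      (by have := hs.1; positivity) hL.le ?_ ?_
    · simpa only [hustar ω hω] using hT ω hω (u k ω) (ustar ω)
    · exact (norm_le_norm_add_norm_sub' _ _).trans (add_le_add (hM ω hω) (hLip ω hω _ _))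
  intro ε hε
  obtain ⟨K, hK⟩ := eventually_atTop.mp <| eventually_forall_le_of_le_mul_add
    (e := fun (ω : Ω) k => hNorm (HM ω) (u k ω - ustar ω))
    (by nlinarith [hμ.1, hμ.2, hρ.2] : μ + (1 - μ) * ρ < 1)
    (by simpa using tendsto_const_nhds.add (((hη.const_mul μ).mul_const L).div_const (c ^ 2)))
    (by simpa using ((hη.const_mul μ).mul_const M).div_const c)
    (fun _ _ => hNorm_nonneg _)
    ⟨C * (‖u0‖ + B), fun ω => hinit ω ω.2⟩
    hstep hε
  exact ⟨K, fun k hk ω hω => hK k hk ⟨ω, hω⟩⟩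

/-- uniform convergence of the aggregated iterates to the unique
fixed point `u*(ω)` of the contraction `T(·,ω)` (Eq. (A.55) of the paper):
`sup_{ω∈Ω} ‖u^k(ω) − u*(ω)‖_{H_ω} → 0`. -/
theorem stmt_14 {n m : ℕ}
    (Ω : Set (EuclideanSpace ℝ (Fin m))) (hΩcp : IsCompact Ω)
    (Hlb Hub : Matrix (Fin n) (Fin n) ℝ) (hlb : Hlb.PosDef) (hub : Hub.PosDef)
    (HM : EuclideanSpace ℝ (Fin m) → Matrix (Fin n) (Fin n) ℝ)
    (hHM : ∀ ω ∈ Ω, (HM ω).PosDef)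
    (hHMlb : ∀ ω ∈ Ω, ∀ x, hIP Hlb x x ≤ hIP (HM ω) x x)
    (hHMub : ∀ ω ∈ Ω, ∀ x, hIP (HM ω) x x ≤ hIP Hub x x)
    (T : EuclideanSpace ℝ (Fin n) → EuclideanSpace ℝ (Fin m) → EuclideanSpace ℝ (Fin n))
    (ρ : ℝ) (hρ : ρ ∈ Set.Ioo (0 : ℝ) 1)
    (hT : ∀ ω ∈ Ω, ∀ u₁ u₂,
      hNorm (HM ω) (T u₁ ω - T u₂ ω) ≤ ρ * hNorm (HM ω) (u₁ - u₂))
    (ustar : EuclideanSpace ℝ (Fin m) → EuclideanSpace ℝ (Fin n))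
    (hustar : ∀ ω ∈ Ω, T (ustar ω) ω = ustar ω)
    (hustarbdd : ∃ B : ℝ, ∀ ω ∈ Ω, ‖ustar ω‖ ≤ B)
    (ℓ : EuclideanSpace ℝ (Fin n) → EuclideanSpace ℝ (Fin m) → ℝ)
    (L : ℝ) (hL : 0 < L)
    (hconv : ∀ ω ∈ Ω, ConvexOn ℝ Set.univ fun x => ℓ x ω)
    (hdiff : ∀ ω ∈ Ω, Differentiable ℝ fun x => ℓ x ω)
    (hLip : ∀ ω ∈ Ω, ∀ u v,
      ‖gradient (fun x => ℓ x ω) u - gradient (fun x => ℓ x ω) v‖ ≤ L * ‖u - v‖)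
    (hMstar : ∃ Mstar : ℝ, ∀ ω ∈ Ω,
      ‖gradient (fun x => ℓ x ω) (ustar ω)‖ ≤ Mstar)
    (μ : ℝ) (hμ : μ ∈ Set.Ioo (0 : ℝ) 1)
    (s : ℝ) (hs : s ∈ Set.Ioo 0 (lambdaMin Hlb hlb.1 / L))
    (u0 : EuclideanSpace ℝ (Fin n))
    (u : ℕ → EuclideanSpace ℝ (Fin m) → EuclideanSpace ℝ (Fin n))
    (hu0 : ∀ ω ∈ Ω, u 0 ω = u0)
    (hrec : ∀ ω ∈ Ω, ∀ k : ℕ, u (k + 1) ω =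
      μ • (u k ω - (s / ((k : ℝ) + 2)) •
        Matrix.toEuclideanLin (HM ω)⁻¹ (gradient (fun x => ℓ x ω) (u k ω)))
      + (1 - μ) • T (u k ω) ω) :
    ∀ ε > (0 : ℝ), ∃ K : ℕ, ∀ k, K ≤ k → ∀ ω ∈ Ω,
      hNorm (HM ω) (u k ω - ustar ω) ≤ ε :=
  stmt_14_general Ω Hlb Hub hlb HM hHM hHMlb hHMub T ρ hρ hT ustar hustar hustarbdd ℓ L hL hLip
    hMstar μ hμ s hs u0 u hu0 hrec
end
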